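/- arXiv:0904.4070 — 4 statements merged into one kernel-verified Lean document; each statement's English description precedes it below -/
import Mathlib

section
/- Let R be a real W*-algebra in B(H) (weakly closed real *-subalgebra with R ∩ iR = {0}, 1 ∈ R). If a, b ∈ R and a + ib ≥ 0 as an operator on H, then a ≥ 0. -/
open Filter Finset
open scoped ComplexOrder Topology

namespace JW

variable {H : Type*} [NormedAddCommGroup H] [InnerProductSpace ℂ H] [CompleteSpace H]

/-- Orthogonal projection predicate. -/
def IsProjection (p : H →L[ℂ] H) : Prop := IsIdempotentElem p ∧ IsSelfAdjoint p

/-- Loewner order: `a ≤ b` iff `b - a` is a positive operator. -/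
def OpLE (a b : H →L[ℂ] H) : Prop := (b - a).IsPositive

/-- The Jordan product `a ∘ b = (ab + ba)/2`. -/
noncomputable def jord (a b : H →L[ℂ] H) : H →L[ℂ] H := (2⁻¹ : ℝ) • (a * b + b * a)

/-- A real W*-algebra: a weakly closed real *-subalgebra `R ⊆ B(H)` with
`R ∩ iR = {0}` and `1 ∈ R`. -/
structure IsRealVNA (R : Set (H →L[ℂ] H)) : Prop where
  zero_mem : (0 : H →L[ℂ] H) ∈ R
  one_mem : (1 : H →L[ℂ] H) ∈ R
  add_mem : ∀ {a b : H →L[ℂ] H}, a ∈ R → b ∈ R → a + b ∈ R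
  smul_mem : ∀ (r : ℝ) {a : H →L[ℂ] H}, a ∈ R → r • a ∈ R
  mul_mem : ∀ {a b : H →L[ℂ] H}, a ∈ R → b ∈ R → a * b ∈ R
  star_mem : ∀ {a : H →L[ℂ] H}, a ∈ R → star a ∈ R
  inter_trivial : ∀ {a : H →L[ℂ] H}, a ∈ R → Complex.I • a ∈ R → a = 0
  wclosed : IsClosed ((ContinuousLinearMapWOT.ofCLM : (H →L[ℂ] H) → (H →WOT[ℂ] H)) '' R)

/-- The self-adjoint part of a set of operators; for a real W*-algebra `R`,
`saPart R` is the associated reversible JW-algebra. -/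
def saPart (R : Set (H →L[ℂ] H)) : Set (H →L[ℂ] H) := {a | a ∈ R ∧ IsSelfAdjoint a}

/-- A faithful normal state on (the self-adjoint part of) an operator algebra `A`,
given as a real-linear functional. Normality is expressed by sequential order
continuity with respect to strong convergence of increasing sequences. -/
structure IsFNState (A : Set (H →L[ℂ] H)) (ρ : (H →L[ℂ] H) →ₗ[ℝ] ℝ) : Prop where
  pos : ∀ a : H →L[ℂ] H, a.IsPositive → 0 ≤ ρ a
  one : ρ 1 = 1
  faithful : ∀ a ∈ A, a.IsPositive → ρ a = 0 → a = 0
  normal : ∀ (x : ℕ → H →L[ℂ] H) (y : H →L[ℂ] H),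
    (∀ n, OpLE (x n) (x (n + 1))) → (∀ n, OpLE (x n) y) →
    (∀ ξ : H, Tendsto (fun n => x n ξ) atTop (𝓝 (y ξ))) →
    Tendsto (fun n => ρ (x n)) atTop (𝓝 (ρ y))

/-- Membership in the bundle determined by a sequence `D` of positive elements of `A`:
nonzero projections `p ∈ A` with `sup_m ‖p(∑_{k≤m} D_k)p‖ < ∞` and `‖p D_m p‖ → 0`. -/
def InBundle (A : Set (H →L[ℂ] H)) (D : ℕ → H →L[ℂ] H) (p : H →L[ℂ] H) : Prop :=
  p ∈ A ∧ IsProjection p ∧ p ≠ 0 ∧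
  (∃ C : ℝ, ∀ m : ℕ, ‖p * (∑ k ∈ Finset.range m, D k) * p‖ ≤ C) ∧
  Tendsto (fun m => ‖p * D m * p‖) atTop (𝓝 0)

/-- Bundle convergence `x_n → l` in the JW-algebra `A` with state `ρ`. -/
def BundleConv (A : Set (H →L[ℂ] H)) (ρ : (H →L[ℂ] H) →ₗ[ℝ] ℝ)
    (x : ℕ → H →L[ℂ] H) (l : H →L[ℂ] H) : Prop :=
  ∃ D : ℕ → H →L[ℂ] H, (∀ m, D m ∈ A ∧ (D m).IsPositive) ∧
    Summable (fun m => ρ (D m)) ∧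
    ∀ p, InBundle A D p → Tendsto (fun n => ‖p * (x n - l) ^ 2 * p‖) atTop (𝓝 0)

/-- Almost uniform convergence in the JW-algebra `A` with state `ρ`. -/
def AUConv (A : Set (H →L[ℂ] H)) (ρ : (H →L[ℂ] H) →ₗ[ℝ] ℝ)
    (x : ℕ → H →L[ℂ] H) (l : H →L[ℂ] H) : Prop :=
  ∀ ε > (0 : ℝ), ∃ p : H →L[ℂ] H, p ∈ A ∧ IsProjection p ∧ ρ (1 - p) < ε ∧
    Tendsto (fun n => ‖p * (x n - l) ^ 2 * p‖) atTop (𝓝 0)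

/-- The enveloping (complex) algebra `W(R) = R + iR` of a real W*-algebra `R`. -/
def envAlg (R : Set (H →L[ℂ] H)) : Set (H →L[ℂ] H) :=
  {w | ∃ u ∈ R, ∃ v ∈ R, w = u + Complex.I • v}

/-- Bundle convergence in a von Neumann algebra `W` with (the restriction to the reals of)
a state `ρ₁`: there is a sequence `D` of positives in `W` with `∑ ρ₁(D_m) < ∞` such that
`‖(x_n - l)p‖ → 0` for every projection in the corresponding bundle. -/
def BundleConvW (W : Set (H →L[ℂ] H)) (ρ₁ : (H →L[ℂ] H) →ₗ[ℂ] ℂ)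
    (x : ℕ → H →L[ℂ] H) (l : H →L[ℂ] H) : Prop :=
  ∃ D : ℕ → H →L[ℂ] H, (∀ m, D m ∈ W ∧ (D m).IsPositive) ∧
    Summable (fun m => (ρ₁ (D m)).re) ∧
    ∀ p, InBundle W D p → Tendsto (fun n => ‖(x n - l) * p‖) atTop (𝓝 0)

/-!
Write `W = R + iR`. Because `R ∩ iR = {0}`, the conjugation `θ (u + iv) = u - iv` is a well-defined
conjugate-linear *-automorphism of `W`, and its graph is a real *-subalgebra of `B(H) × B(H)`,
closed because `R` is. The continuous functional calculus preserves closed *-subalgebras and is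
computed componentwise on a product, so `θ` commutes with negative parts. For `y = a + ib ≥ 0`
this gives `(a - ib)⁻ = θ (y⁻) = 0`, i.e. `a - ib ≥ 0`, and so `a = ((a + ib) + (a - ib)) / 2 ≥ 0`.
-/

section ConjGraph

open Complex

variable {A : Type*} [CStarAlgebra A]

def conjGraph (R : NonUnitalStarSubalgebra ℝ A) : NonUnitalStarSubalgebra ℝ (A × A) where
  carrier := {w | ∃ u ∈ R, ∃ v ∈ R, w = (u + I • v, u - I • v)}
  zero_mem' := ⟨0, zero_mem R, 0, zero_mem R, by ext <;> simp⟩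
  add_mem' := by
    rintro _ _ ⟨u, hu, v, hv, rfl⟩ ⟨u', hu', v', hv', rfl⟩
    refine ⟨u + u', add_mem hu hu', v + v', add_mem hv hv', ?_⟩
    ext <;> simp only [Prod.fst_add, Prod.snd_add, smul_add] <;> abel
  mul_mem' := by
    rintro _ _ ⟨u, hu, v, hv, rfl⟩ ⟨u', hu', v', hv', rfl⟩
    refine ⟨u * u' - v * v', sub_mem (mul_mem hu hu') (mul_mem hv hv'),
      u * v' + v * u', add_mem (mul_mem hu hv') (mul_mem hv hu'), ?_⟩
    ext <;> simp only [Prod.fst_mul, Prod.snd_mul, mul_add, add_mul, mul_sub, sub_mul,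
      smul_mul_assoc, mul_smul_comm] <;> match_scalars <;> simp
  smul_mem' := by
    rintro r _ ⟨u, hu, v, hv, rfl⟩
    refine ⟨r • u, SMulMemClass.smul_mem r hu, r • v, SMulMemClass.smul_mem r hv, ?_⟩
    ext <;> simp only [Prod.smul_fst, Prod.smul_snd, smul_add, smul_sub, smul_comm r I]
  star_mem' := by
    rintro _ ⟨u, hu, v, hv, rfl⟩
    refine ⟨star u, star_mem hu, -star v, neg_mem (star_mem hv), ?_⟩
    ext <;> simp [star_smul, sub_eq_add_neg]

variable {R : NonUnitalStarSubalgebra ℝ A}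

lemma isClosed_conjGraph (hR : IsClosed (R : Set A)) :
    IsClosed (conjGraph R : Set (A × A)) := by
  have : (conjGraph R : Set (A × A)) = (fun w : A × A =>
      ((2⁻¹ : ℂ) • (w.1 + w.2), (-(2⁻¹ * I) : ℂ) • (w.1 - w.2))) ⁻¹' (R ×ˢ R) := by
    ext w
    constructor
    · rintro ⟨u, hu, v, hv, rfl⟩
      have h₁ : (2⁻¹ : ℂ) • ((u + I • v) + (u - I • v)) = u := by
        match_scalars <;> simp [Complex.ext_iff]; norm_num
      have h₂ : (-(2⁻¹ * I) : ℂ) • ((u + I • v) - (u - I • v)) = v := by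
        match_scalars <;> simp [Complex.ext_iff]; norm_num
      simpa only [Set.mem_preimage, Set.mem_prod, h₁, h₂] using ⟨hu, hv⟩
    · rintro ⟨hu, hv⟩
      refine ⟨_, hu, _, hv, ?_⟩
      ext <;> match_scalars <;> simp [Complex.ext_iff] <;> norm_num
  rw [this]
  exact (hR.prod hR).preimage (by fun_prop)

lemma eq_zero_of_mk_zero_mem_conjGraph (hRI : ∀ u ∈ R, I • u ∈ R → u = 0) {z : A}
    (hz : (0, z) ∈ conjGraph R) : z = 0 := by
  obtain ⟨u, hu, v, hv, h⟩ := hz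
  simp only [Prod.mk.injEq] at h
  have hv₀ : v = 0 := hRI v hv (by rw [eq_neg_of_add_eq_zero_right h.1.symm]; exact neg_mem hu)
  subst hv₀
  simp only [smul_zero, add_zero, sub_zero] at h
  rw [h.2, ← h.1]

lemma isSelfAdjoint_snd_of_mem_conjGraph (hRI : ∀ u ∈ R, I • u ∈ R → u = 0) {y z : A}
    (hyz : (y, z) ∈ conjGraph R) (hy : IsSelfAdjoint y) : IsSelfAdjoint z := by
  have h : (0, star z - z) ∈ conjGraph R := by
    convert sub_mem (star_mem hyz) hyz using 1
    ext <;> simp [hy.star_eq]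
  exact sub_eq_zero.mp (eq_zero_of_mk_zero_mem_conjGraph hRI h)

lemma negPart_mem_conjGraph (hR : IsClosed (R : Set A)) {y z : A} (hyz : (y, z) ∈ conjGraph R)
    (hy : IsSelfAdjoint y) (hz : IsSelfAdjoint z) : (y⁻, z⁻) ∈ conjGraph R := by
  have := isClosed_conjGraph hR
  have hsa : IsSelfAdjoint (y, z) := Prod.ext hy hz
  rw [CFC.negPart_def, CFC.negPart_def, ← cfcₙ_map_prod (S := ℂ) _ y z]
  exact cfcₙ_mem (𝕜' := ℝ) _ hyz

variable [PartialOrder A] [StarOrderedRing A]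

theorem nonneg_sub_I_smul_of_nonneg_add_I_smul (hR : IsClosed (R : Set A))
    (hRI : ∀ u ∈ R, I • u ∈ R → u = 0) {a b : A} (ha : a ∈ R) (hb : b ∈ R)
    (h : 0 ≤ a + I • b) : 0 ≤ a - I • b := by
  have hmem : (a + I • b, a - I • b) ∈ conjGraph R := ⟨a, ha, b, hb, rfl⟩
  have hz := isSelfAdjoint_snd_of_mem_conjGraph hRI hmem h.isSelfAdjoint
  have hneg := negPart_mem_conjGraph hR hmem h.isSelfAdjoint hz
  rw [(CFC.negPart_eq_zero_iff _ h.isSelfAdjoint).mpr h] at hneg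
  exact (CFC.negPart_eq_zero_iff _ hz).mp (eq_zero_of_mk_zero_mem_conjGraph hRI hneg)

theorem nonneg_of_nonneg_add_I_smul (hR : IsClosed (R : Set A))
    (hRI : ∀ u ∈ R, I • u ∈ R → u = 0) {a b : A} (ha : a ∈ R) (hb : b ∈ R)
    (h : 0 ≤ a + I • b) : 0 ≤ a := by
  have h' := nonneg_sub_I_smul_of_nonneg_add_I_smul hR hRI ha hb h
  have : a = (2⁻¹ : ℝ) • ((a + I • b) + (a - I • b)) := by
    rw [add_add_sub_cancel, ← two_smul ℝ a, smul_smul]; norm_num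
  rw [this]
  exact smul_nonneg (by norm_num) (add_nonneg h h')

end ConjGraph

namespace IsRealVNA

variable {R : Set (H →L[ℂ] H)}

def toNonUnitalStarSubalgebra (hR : IsRealVNA R) : NonUnitalStarSubalgebra ℝ (H →L[ℂ] H) where
  carrier := R
  add_mem' := hR.add_mem
  zero_mem' := hR.zero_mem
  mul_mem' := hR.mul_mem
  smul_mem' := hR.smul_mem
  star_mem' := hR.star_mem

lemma isClosed (hR : IsRealVNA R) : IsClosed R := by
  rw [← Set.preimage_image_eq R ContinuousLinearMapWOT.ofCLM_injective]
  exact hR.wclosed.preimage ContinuousLinearMapWOT.continuous_ofCLM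

end IsRealVNA

/-- in a real W*-algebra `R`, if `a + ib ≥ 0` for `a, b ∈ R`, then `a ≥ 0`. -/
theorem statement3 (R : Set (H →L[ℂ] H)) (hR : IsRealVNA R)
    (a b : H →L[ℂ] H) (ha : a ∈ R) (hb : b ∈ R)
    (hpos : (a + Complex.I • b).IsPositive) :
    a.IsPositive := by
  rw [← ContinuousLinearMap.nonneg_iff_isPositive] at hpos ⊢
  exact nonneg_of_nonneg_add_I_smul (R := hR.toNonUnitalStarSubalgebra) hR.isClosed
    (fun _ ↦ hR.inter_trivial) ha hb hpos

end JW
end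

section
/- Let A be a reversible JW-algebra with faithful normal state ρ, and {x_n} ⊂ A pairwise orthogonal (ρ(x_i ∘ x_j) = 0 for i ≠ j). If ∑_{n=1}^∞ (log₂(n+1)/n)² ρ(|x_n|²) < ∞, then (1/n)∑_{j=1}^n x_j → 0 in bundle convergence in A. -/
/-!
Rademacher–Menshov argument, carried out in the Loewner order. For `2 ^ k ≤ n < 2 ^ (k + 1)`
split `S_n = ∑_{j<n} x_j` into `S_{2^k}` and the segment over `[2 ^ k, n)`; the segment is a sum of
at most `k` dyadic blocks, one per level, so Cauchy–Schwarz gives `(S_n / n)² ≤ 2 D_k` with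
`D_k = 4⁻ᵏ S_{2^k}² + k 4⁻ᵏ ∑ B²`, the last sum running over all dyadic blocks `B` inside
`[2 ^ k, 2 ^ (k + 1))`. Orthogonality makes `ρ (B²)` additive over the indices of `B`, hence
`ρ D_k = 4⁻ᵏ ∑_{j<2^k} ρ(x_j²) + k² 4⁻ᵏ ∑_{2^k ≤ j < 2^(k+1)} ρ(x_j²)`, which is summable by the
logarithmic weight hypothesis. So `D` witnesses bundle convergence: on its bundle
`‖p (S_n / n)² p‖ ≤ 2 ‖p D_k p‖ → 0`.
-/


open Filter Finset
open scoped ComplexOrder Topology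

namespace JW

section Dyadic

variable {M : Type*} [AddCommMonoid M]

def dyadicBlock (v : ℕ → M) (i l : ℕ) : M := ∑ j ∈ Ico (l * 2 ^ i) ((l + 1) * 2 ^ i), v j

lemma sum_Ico_dyadicBlock (v : ℕ → M) (i : ℕ) {a c : ℕ} (hac : a ≤ c) :
    ∑ l ∈ Ico a c, dyadicBlock v i l = ∑ j ∈ Ico (a * 2 ^ i) (c * 2 ^ i), v j := by
  induction c, hac using Nat.le_induction with
  | base => simp
  | succ c hac ih =>
    rw [sum_Ico_succ_top hac, ih, dyadicBlock, sum_Ico_consecutive]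
    · exact Nat.mul_le_mul_right _ hac
    · exact Nat.mul_le_mul_right _ c.le_succ

lemma exists_sum_Ico_eq_sum_dyadicBlock (v : ℕ → M) {k m : ℕ} (a : ℕ) (hm : m < 2 ^ k) :
    ∃ s ⊆ range k, ∃ l : ℕ → ℕ,
      (∀ i ∈ s, l i ∈ Ico (a * 2 ^ (k - i)) ((a + 1) * 2 ^ (k - i))) ∧
      ∑ j ∈ Ico (a * 2 ^ k) (a * 2 ^ k + m), v j = ∑ i ∈ s, dyadicBlock v i (l i) := by
  -- Either the segment stays in the left half `[2a·2^k, (2a+1)·2^k)` of the level-`(k+1)` block,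
  -- or it is that half, `dyadicBlock v k (2a)`, followed by a segment starting at `(2a+1)·2^k`.
  induction k generalizing a m with
  | zero =>
    obtain rfl : m = 0 := by simpa using hm
    exact ⟨∅, empty_subset _, id, by simp, by simp⟩
  | succ k ih =>
    have hpow : ∀ i ≤ k, 2 ^ (k + 1 - i) = 2 * 2 ^ (k - i) := fun i hi => by
      rw [Nat.sub_add_comm hi, pow_succ, mul_comm]
    have hstart : a * 2 ^ (k + 1) = 2 * a * 2 ^ k := by ring
    by_cases hmk : m < 2 ^ k
    · obtain ⟨s, hs, l, hl, h⟩ := ih (2 * a) hmk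
      refine ⟨s, hs.trans (range_subset_range.2 k.le_succ), l, fun i hi => ?_, by rw [hstart, h]⟩
      have hik : i ≤ k := (mem_range.1 (hs hi)).le
      obtain ⟨h₁, h₂⟩ := mem_Ico.1 (hl i hi)
      rw [mem_Ico, hpow i hik]
      constructor <;> nlinarith
    · obtain ⟨s, hs, l, hl, h⟩ := ih (2 * a + 1) (m := m - 2 ^ k) (by rw [pow_succ] at hm; omega)
      have hk : k ∉ s := fun hk => by simpa using hs hk
      refine ⟨insert k s,
        insert_subset (self_mem_range_succ k) (hs.trans (range_subset_range.2 k.le_succ)),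
        fun i => if i = k then 2 * a else l i, ?_, ?_⟩
      · intro i hi
        rcases mem_insert.1 hi with rfl | hi
        · simp [mem_Ico]; omega
        · have hik : i ≤ k := (mem_range.1 (hs hi)).le
          obtain ⟨h₁, h₂⟩ := mem_Ico.1 (hl i hi)
          dsimp only
          rw [if_neg (ne_of_mem_of_not_mem hi hk), mem_Ico, hpow i hik]
          constructor <;> nlinarith
      · have hrest : ∑ i ∈ s, dyadicBlock v i (if i = k then 2 * a else l i) =
            ∑ i ∈ s, dyadicBlock v i (l i) :=
          sum_congr rfl fun i hi => by rw [if_neg (ne_of_mem_of_not_mem hi hk)]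
        have hmid : (2 * a + 1) * 2 ^ k = 2 * a * 2 ^ k + 2 ^ k := by ring
        dsimp only
        rw [sum_insert hk, if_pos rfl, hrest, ← h, dyadicBlock,
          sum_Ico_consecutive _ (by omega) (by omega), hstart]
        congr 2
        omega

end Dyadic

section Normed

variable {E : Type*} [SeminormedAddCommGroup E]

lemma norm_sum_Ico_sq_le (v : ℕ → E) {k m : ℕ} (a : ℕ) (hm : m < 2 ^ k) :
    ‖∑ j ∈ Ico (a * 2 ^ k) (a * 2 ^ k + m), v j‖ ^ 2 ≤
      k * ∑ i ∈ range k, ∑ l ∈ Ico (a * 2 ^ (k - i)) ((a + 1) * 2 ^ (k - i)),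
        ‖dyadicBlock v i l‖ ^ 2 := by
  obtain ⟨s, hs, l, hl, h⟩ := exists_sum_Ico_eq_sum_dyadicBlock v a hm
  calc ‖∑ j ∈ Ico (a * 2 ^ k) (a * 2 ^ k + m), v j‖ ^ 2
      ≤ (∑ i ∈ s, ‖dyadicBlock v i (l i)‖) ^ 2 := by
        rw [h]; gcongr; exact norm_sum_le _ _
    _ ≤ #s * ∑ i ∈ s, ‖dyadicBlock v i (l i)‖ ^ 2 := sq_sum_le_card_mul_sum_sq
    _ ≤ k * ∑ i ∈ range k, ∑ l ∈ Ico (a * 2 ^ (k - i)) ((a + 1) * 2 ^ (k - i)),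
          ‖dyadicBlock v i l‖ ^ 2 := by
        gcongr
        · simpa using card_le_card hs
        · calc ∑ i ∈ s, ‖dyadicBlock v i (l i)‖ ^ 2
              ≤ ∑ i ∈ s, ∑ l ∈ Ico (a * 2 ^ (k - i)) ((a + 1) * 2 ^ (k - i)),
                  ‖dyadicBlock v i l‖ ^ 2 :=
                sum_le_sum fun i hi => single_le_sum (f := fun l => ‖dyadicBlock v i l‖ ^ 2)
                  (fun _ _ => sq_nonneg _) (hl i hi)
            _ ≤ _ := sum_le_sum_of_subset_of_nonneg hs fun _ _ _ =>
                sum_nonneg fun _ _ => sq_nonneg _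

lemma norm_sum_range_sq_le (v : ℕ → E) {k n : ℕ} (hkn : 2 ^ k ≤ n) (hnk : n < 2 ^ (k + 1)) :
    ‖∑ j ∈ range n, v j‖ ^ 2 ≤ 2 * ‖∑ j ∈ range (2 ^ k), v j‖ ^ 2 +
      2 * k * ∑ i ∈ range k, ∑ l ∈ Ico (2 ^ (k - i)) (2 * 2 ^ (k - i)),
        ‖dyadicBlock v i l‖ ^ 2 := by
  have htail := norm_sum_Ico_sq_le v 1 (k := k) (m := n - 2 ^ k) (by rw [pow_succ] at hnk; omega)
  simp only [one_mul, one_add_one_eq_two, Nat.add_sub_cancel' hkn] at htail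
  calc ‖∑ j ∈ range n, v j‖ ^ 2
      ≤ (‖∑ j ∈ range (2 ^ k), v j‖ + ‖∑ j ∈ Ico (2 ^ k) n, v j‖) ^ 2 := by
        rw [← sum_range_add_sum_Ico _ hkn]; gcongr; exact norm_add_le _ _
    _ ≤ 2 * (‖∑ j ∈ range (2 ^ k), v j‖ ^ 2 + ‖∑ j ∈ Ico (2 ^ k) n, v j‖ ^ 2) := add_sq_le
    _ ≤ _ := by rw [mul_assoc 2, mul_add]; gcongr

end Normed

section Summability

lemma summable_sum_Ico_two_pow {f : ℕ → ℝ} (hf : ∀ j, 0 ≤ f j) (h : Summable f) :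
    Summable fun k => ∑ j ∈ Ico (2 ^ k) (2 ^ (k + 1)), f j := by
  refine summable_of_sum_range_le (c := ∑' j, f j) (fun k => sum_nonneg fun j _ => hf j) fun K => ?_
  have hmono : ∀ k, 2 ^ k ≤ 2 ^ (k + 1) := fun k => Nat.pow_le_pow_right two_pos k.le_succ
  calc ∑ k ∈ range K, ∑ j ∈ Ico (2 ^ k) (2 ^ (k + 1)), f j
      = ∑ j ∈ range (2 ^ K), f j - ∑ j ∈ range 1, f j := by
        simp_rw [sum_Ico_eq_sub f (hmono _)]
        exact sum_range_sub (fun k => ∑ j ∈ range (2 ^ k), f j) K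
    _ ≤ ∑ j ∈ range (2 ^ K), f j := sub_le_self _ (sum_nonneg fun j _ => hf j)
    _ ≤ ∑' j, f j := h.sum_le_tsum _ fun j _ => hf j

lemma sum_filter_inv_four_pow_le (j K : ℕ) :
    ∑ k ∈ (range K).filter (j < 2 ^ ·), (4 : ℝ)⁻¹ ^ k ≤ 4 / 3 / ((j : ℝ) + 1) ^ 2 := by
  set c := Nat.clog 2 (j + 1)
  have hsub : (range K).filter (j < 2 ^ ·) ⊆ Ico c K := fun k hk => by
    obtain ⟨hkK, hjk⟩ := mem_filter.1 hk
    exact mem_Ico.2 ⟨Nat.clog_le_of_le_pow hjk, mem_range.1 hkK⟩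
  have hc : ((j : ℝ) + 1) ^ 2 ≤ 4 ^ c := by
    rw [show (4 : ℝ) ^ c = ((2 : ℝ) ^ c) ^ 2 by rw [← pow_mul, mul_comm, pow_mul]; norm_num]
    gcongr
    exact_mod_cast Nat.le_pow_clog one_lt_two (j + 1)
  calc ∑ k ∈ (range K).filter (j < 2 ^ ·), (4 : ℝ)⁻¹ ^ k
      ≤ ∑ k ∈ Ico c K, (4 : ℝ)⁻¹ ^ k :=
        sum_le_sum_of_subset_of_nonneg hsub fun _ _ _ => by positivity
    _ ≤ (4 : ℝ)⁻¹ ^ c / (1 - 4⁻¹) := geom_sum_Ico_le_of_lt_one (by norm_num) (by norm_num)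
    _ = 4 / 3 / 4 ^ c := by rw [inv_pow]; field_simp; norm_num
    _ ≤ 4 / 3 / ((j : ℝ) + 1) ^ 2 := div_le_div_of_nonneg_left (by norm_num) (by positivity) hc

lemma summable_inv_four_pow_mul_sum_range {b : ℕ → ℝ} (hb : ∀ j, 0 ≤ b j)
    (h : Summable fun j : ℕ => b j / ((j : ℝ) + 1) ^ 2) :
    Summable fun k => (4 : ℝ)⁻¹ ^ k * ∑ j ∈ range (2 ^ k), b j := by
  refine summable_of_sum_range_le (c := 4 / 3 * ∑' j : ℕ, b j / ((j : ℝ) + 1) ^ 2)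
    (fun k => mul_nonneg (by positivity) (sum_nonneg fun j _ => hb j)) fun K => ?_
  calc ∑ k ∈ range K, (4 : ℝ)⁻¹ ^ k * ∑ j ∈ range (2 ^ k), b j
      = ∑ j ∈ range (2 ^ K), ∑ k ∈ (range K).filter (j < 2 ^ ·), (4 : ℝ)⁻¹ ^ k * b j := by
        simp_rw [mul_sum]
        refine sum_comm' fun k j => ?_
        simp only [mem_range, mem_filter]
        constructor
        · rintro ⟨hk, hj⟩
          exact ⟨⟨hk, hj⟩, hj.trans_le (Nat.pow_le_pow_right two_pos hk.le)⟩
        · rintro ⟨⟨hk, hj⟩, -⟩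
          exact ⟨hk, hj⟩
    _ ≤ ∑ j ∈ range (2 ^ K), 4 / 3 * (b j / ((j : ℝ) + 1) ^ 2) := by
        refine sum_le_sum fun j _ => ?_
        rw [← sum_mul]
        exact (mul_le_mul_of_nonneg_right (sum_filter_inv_four_pow_le j K) (hb j)).trans_eq
          (by ring)
    _ ≤ 4 / 3 * ∑' j : ℕ, b j / ((j : ℝ) + 1) ^ 2 := by
        rw [← mul_sum]
        gcongr
        exact h.sum_le_tsum _ fun j _ => div_nonneg (hb j) (by positivity)

lemma inv_sq_le_logb_div_sq (j : ℕ) :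
    1 / ((j : ℝ) + 1) ^ 2 ≤ (Real.logb 2 ((j : ℝ) + 2) / ((j : ℝ) + 1)) ^ 2 := by
  have hlog : 1 ≤ Real.logb 2 ((j : ℝ) + 2) := by
    rw [Real.le_logb_iff_rpow_le one_lt_two (by positivity), Real.rpow_one]
    linarith [j.cast_nonneg (α := ℝ)]
  rw [div_pow]
  gcongr
  exact one_le_pow₀ hlog

lemma sq_mul_inv_four_pow_le {k j : ℕ} (hkj : 2 ^ k ≤ j) (hjk : j < 2 ^ (k + 1)) :
    (k : ℝ) ^ 2 * (4 : ℝ)⁻¹ ^ k ≤ 4 * (Real.logb 2 ((j : ℝ) + 2) / ((j : ℝ) + 1)) ^ 2 := by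
  have hk : (k : ℝ) ≤ Real.logb 2 ((j : ℝ) + 2) := by
    rw [Real.le_logb_iff_rpow_le one_lt_two (by positivity), Real.rpow_natCast]
    have : ((2 ^ k : ℕ) : ℝ) ≤ j := by exact_mod_cast hkj
    push_cast at this
    linarith
  have hj : (j : ℝ) + 1 ≤ 2 * 2 ^ k := by
    have : ((j + 1 : ℕ) : ℝ) ≤ ((2 ^ (k + 1) : ℕ) : ℝ) := by exact_mod_cast hjk
    push_cast at this
    linarith [pow_succ (2 : ℝ) k]
  calc (k : ℝ) ^ 2 * (4 : ℝ)⁻¹ ^ k = ((k : ℝ) / 2 ^ k) ^ 2 := by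
        rw [div_pow, ← pow_mul, mul_comm k, pow_mul, inv_pow, div_eq_mul_inv]; norm_num
    _ ≤ (2 * Real.logb 2 ((j : ℝ) + 2) / ((j : ℝ) + 1)) ^ 2 := by
        refine pow_le_pow_left₀ (by positivity) ?_ 2
        rw [div_le_div_iff₀ (by positivity) (by positivity)]
        nlinarith [k.cast_nonneg (α := ℝ)]
    _ = 4 * (Real.logb 2 ((j : ℝ) + 2) / ((j : ℝ) + 1)) ^ 2 := by ring

end Summability

section Operators

open ContinuousLinearMap

variable {H : Type*} [NormedAddCommGroup H] [InnerProductSpace ℂ H]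

lemma jord_self (a : H →L[ℂ] H) : jord a a = a ^ 2 := by
  rw [jord, ← two_smul ℝ, smul_smul, inv_mul_cancel₀ two_ne_zero, one_smul, sq]

lemma map_sum_sq_of_jord_eq_zero (ρ : (H →L[ℂ] H) →ₗ[ℝ] ℝ) {x : ℕ → H →L[ℂ] H}
    (horth : ∀ i j, i ≠ j → ρ (jord (x i) (x j)) = 0) (s : Finset ℕ) :
    ρ ((∑ j ∈ s, x j) ^ 2) = ∑ j ∈ s, ρ (x j ^ 2) := by
  have hsymm : ∑ i ∈ s, ∑ j ∈ s, jord (x i) (x j) = (∑ j ∈ s, x j) ^ 2 := by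
    have hswap : ∑ i ∈ s, ∑ j ∈ s, x j * x i = ∑ i ∈ s, ∑ j ∈ s, x i * x j := sum_comm
    simp only [jord, ← smul_sum, sum_add_distrib, hswap, ← two_smul ℝ, smul_smul]
    rw [inv_mul_cancel₀ two_ne_zero, one_smul, sq, sum_mul_sum]
  rw [← hsymm, map_sum]
  refine sum_congr rfl fun i hi => ?_
  rw [map_sum, sum_eq_single_of_mem i hi fun j _ hji => horth i j (Ne.symm hji), jord_self]

noncomputable def dyadicMajorant (x : ℕ → H →L[ℂ] H) (k : ℕ) : H →L[ℂ] H :=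
  (4 : ℝ)⁻¹ ^ k • (∑ j ∈ range (2 ^ k), x j) ^ 2 +
    ((k : ℝ) * (4 : ℝ)⁻¹ ^ k) •
      ∑ i ∈ range k, ∑ l ∈ Ico (2 ^ (k - i)) (2 * 2 ^ (k - i)), dyadicBlock x i l ^ 2

variable {x : ℕ → H →L[ℂ] H}

lemma map_dyadicMajorant (ρ : (H →L[ℂ] H) →ₗ[ℝ] ℝ)
    (horth : ∀ i j, i ≠ j → ρ (jord (x i) (x j)) = 0) (k : ℕ) :
    ρ (dyadicMajorant x k) = (4 : ℝ)⁻¹ ^ k * ∑ j ∈ range (2 ^ k), ρ (x j ^ 2) +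
      (k : ℝ) ^ 2 * (4 : ℝ)⁻¹ ^ k * ∑ j ∈ Ico (2 ^ k) (2 ^ (k + 1)), ρ (x j ^ 2) := by
  have hlevel : ∀ i ∈ range k,
      ∑ l ∈ Ico (2 ^ (k - i)) (2 * 2 ^ (k - i)), ρ (dyadicBlock x i l ^ 2) =
        ∑ j ∈ Ico (2 ^ k) (2 ^ (k + 1)), ρ (x j ^ 2) := fun i hi => by
    have hik : i ≤ k := (mem_range.1 hi).le
    have hblock : ∀ l, ρ (dyadicBlock x i l ^ 2) = dyadicBlock (fun j => ρ (x j ^ 2)) i l :=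
      fun l => map_sum_sq_of_jord_eq_zero ρ horth _
    rw [sum_congr rfl fun l _ => hblock l, sum_Ico_dyadicBlock _ _ (by omega), ← pow_add,
      mul_assoc, ← pow_add, Nat.sub_add_cancel hik, pow_succ']
  rw [dyadicMajorant, map_add, map_smul, map_smul, map_sum_sq_of_jord_eq_zero ρ horth, map_sum,
    sum_congr rfl fun i hi => (map_sum ρ _ _).trans (hlevel i hi), sum_const, card_range,
    smul_eq_mul, smul_eq_mul, nsmul_eq_mul]
  ring

lemma summable_map_dyadicMajorant (ρ : (H →L[ℂ] H) →ₗ[ℝ] ℝ) (hb : ∀ j, 0 ≤ ρ (x j ^ 2))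
    (horth : ∀ i j, i ≠ j → ρ (jord (x i) (x j)) = 0)
    (hsum : Summable fun n : ℕ =>
      (Real.logb 2 ((n : ℝ) + 2) / ((n : ℝ) + 1)) ^ 2 * ρ (x n ^ 2)) :
    Summable fun k => ρ (dyadicMajorant x k) := by
  have hwb : ∀ j : ℕ, 0 ≤ (Real.logb 2 ((j : ℝ) + 2) / ((j : ℝ) + 1)) ^ 2 * ρ (x j ^ 2) :=
    fun j => mul_nonneg (sq_nonneg _) (hb j)
  simp_rw [map_dyadicMajorant ρ horth]
  refine Summable.add (summable_inv_four_pow_mul_sum_range hb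
    (hsum.of_nonneg_of_le (fun j => div_nonneg (hb j) (by positivity)) fun j => ?_)) ?_
  · rw [div_eq_mul_one_div, mul_comm]
    exact mul_le_mul_of_nonneg_right (inv_sq_le_logb_div_sq j) (hb j)
  · refine ((summable_sum_Ico_two_pow hwb hsum).mul_left 4).of_nonneg_of_le
      (fun k => mul_nonneg (by positivity) (sum_nonneg fun j _ => hb j)) fun k => ?_
    rw [mul_sum, mul_sum]
    refine sum_le_sum fun j hj => ?_
    obtain ⟨hkj, hjk⟩ := mem_Ico.1 hj
    rw [← mul_assoc]
    exact mul_le_mul_of_nonneg_right (sq_mul_inv_four_pow_le hkj hjk) (hb j)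

noncomputable def reApplyInnerSelfₗ (η : H) : (H →L[ℂ] H) →ₗ[ℝ] ℝ where
  toFun T := T.reApplyInnerSelf η
  map_add' S T := by simp only [reApplyInnerSelf_apply, add_apply, inner_add_left, map_add]
  map_smul' r T := by
    simp only [reApplyInnerSelf_apply, smul_apply, RCLike.real_smul_eq_coe_smul (K := ℂ),
      inner_smul_real_left, RingHom.id_apply, smul_eq_mul, RCLike.re_ofReal_mul]

@[simp]
lemma reApplyInnerSelfₗ_apply (η : H) (T : H →L[ℂ] H) :
    reApplyInnerSelfₗ η T = T.reApplyInnerSelf η :=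
  rfl

lemma dyadicBlock_apply (x : ℕ → H →L[ℂ] H) (i l : ℕ) (η : H) :
    dyadicBlock x i l η = dyadicBlock (fun j => x j η) i l :=
  sum_apply _ _ _

variable [CompleteSpace H]

def IsRealVNA.toSubalgebra {R : Set (H →L[ℂ] H)} (hR : IsRealVNA R) :
    Subalgebra ℝ (H →L[ℂ] H) where
  carrier := R
  mul_mem' := hR.mul_mem
  add_mem' := hR.add_mem
  algebraMap_mem' r := by
    rw [Algebra.algebraMap_eq_smul_one]
    exact hR.smul_mem r hR.one_mem

lemma reApplyInnerSelf_sq {a : H →L[ℂ] H} (ha : IsSelfAdjoint a) (η : H) :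
    (a ^ 2).reApplyInnerSelf η = ‖a η‖ ^ 2 := by
  rw [sq, reApplyInnerSelf_apply, mul_apply_eq_comp, ← adjoint_inner_right, ha.adjoint_eq,
    inner_self_eq_norm_sq]

lemma le_of_reApplyInnerSelf_le {a b : H →L[ℂ] H} (ha : IsSelfAdjoint a) (hb : IsSelfAdjoint b)
    (h : ∀ η, a.reApplyInnerSelf η ≤ b.reApplyInnerSelf η) : a ≤ b := by
  rw [ContinuousLinearMap.le_def, isPositive_def']
  refine ⟨hb.sub ha, fun η => ?_⟩
  have := h η
  simp only [reApplyInnerSelf_apply, sub_apply, inner_sub_left, map_sub] at this ⊢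
  linarith

lemma isSelfAdjoint_dyadicBlock {x : ℕ → H →L[ℂ] H} (hx : ∀ j, IsSelfAdjoint (x j)) (i l : ℕ) :
    IsSelfAdjoint (dyadicBlock x i l) :=
  isSelfAdjoint_sum _ fun j _ => hx j

lemma dyadicMajorant_nonneg (hx : ∀ j, IsSelfAdjoint (x j)) (k : ℕ) : 0 ≤ dyadicMajorant x k :=
  add_nonneg (smul_nonneg (by positivity) (isSelfAdjoint_sum _ fun j _ => hx j).sq_nonneg)
    (smul_nonneg (by positivity) (sum_nonneg fun i _ => sum_nonneg fun l _ =>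
      (isSelfAdjoint_dyadicBlock hx i l).sq_nonneg))

lemma dyadicMajorant_mem {R : Set (H →L[ℂ] H)} (hR : IsRealVNA R) (hx : ∀ j, x j ∈ R) (k : ℕ) :
    dyadicMajorant x k ∈ hR.toSubalgebra := by
  have hsum : ∀ s : Finset ℕ, ∑ j ∈ s, x j ∈ hR.toSubalgebra := fun s =>
    Subalgebra.sum_mem _ fun j _ => hx j
  exact add_mem (Subalgebra.smul_mem _ (pow_mem (hsum _) 2) _) (Subalgebra.smul_mem _
    (Subalgebra.sum_mem _ fun i _ => Subalgebra.sum_mem _ fun l _ => pow_mem (hsum _) 2) _)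

lemma reApplyInnerSelf_dyadicMajorant (hx : ∀ j, IsSelfAdjoint (x j)) (k : ℕ) (η : H) :
    (dyadicMajorant x k).reApplyInnerSelf η =
      (4 : ℝ)⁻¹ ^ k * ‖∑ j ∈ range (2 ^ k), x j η‖ ^ 2 + (k : ℝ) * (4 : ℝ)⁻¹ ^ k *
        ∑ i ∈ range k, ∑ l ∈ Ico (2 ^ (k - i)) (2 * 2 ^ (k - i)),
          ‖dyadicBlock (fun j => x j η) i l‖ ^ 2 := by
  rw [← reApplyInnerSelfₗ_apply]
  simp only [dyadicMajorant, map_add, map_smul, map_sum, smul_eq_mul, reApplyInnerSelfₗ_apply,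
    reApplyInnerSelf_sq (isSelfAdjoint_sum _ fun j _ => hx j),
    reApplyInnerSelf_sq (isSelfAdjoint_dyadicBlock hx _ _), _root_.sum_apply,
    dyadicBlock_apply]

lemma cesaro_sq_le_two_smul_dyadicMajorant (hx : ∀ j, IsSelfAdjoint (x j)) {k n : ℕ}
    (hkn : 2 ^ k ≤ n) (hnk : n < 2 ^ (k + 1)) :
    ((n : ℝ)⁻¹ • ∑ j ∈ range n, x j) ^ 2 ≤ (2 : ℝ) • dyadicMajorant x k := by
  have hS : IsSelfAdjoint (∑ j ∈ range n, x j) := isSelfAdjoint_sum _ fun j _ => hx j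
  rw [smul_pow]
  refine le_of_reApplyInnerSelf_le
    (IsSelfAdjoint.of_nonneg (smul_nonneg (by positivity) hS.sq_nonneg))
    (IsSelfAdjoint.of_nonneg (smul_nonneg zero_le_two (dyadicMajorant_nonneg hx k))) fun η => ?_
  rw [← reApplyInnerSelfₗ_apply, ← reApplyInnerSelfₗ_apply, map_smul, map_smul, smul_eq_mul,
    smul_eq_mul, reApplyInnerSelfₗ_apply, reApplyInnerSelfₗ_apply, reApplyInnerSelf_sq hS,
    reApplyInnerSelf_dyadicMajorant hx, _root_.sum_apply]
  have h4 : (4 : ℝ) ^ k = ((2 ^ k : ℕ) : ℝ) ^ 2 := by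
    push_cast
    rw [← pow_mul, mul_comm, pow_mul]
    norm_num
  have hn : ((n : ℝ)⁻¹) ^ 2 ≤ (4 : ℝ)⁻¹ ^ k := by
    rw [inv_pow, inv_pow, h4]
    gcongr
  calc ((n : ℝ)⁻¹) ^ 2 * ‖∑ j ∈ range n, x j η‖ ^ 2
      ≤ (4 : ℝ)⁻¹ ^ k * ‖∑ j ∈ range n, x j η‖ ^ 2 := by gcongr
    _ ≤ (4 : ℝ)⁻¹ ^ k * (2 * ‖∑ j ∈ range (2 ^ k), x j η‖ ^ 2 + 2 * k *
          ∑ i ∈ range k, ∑ l ∈ Ico (2 ^ (k - i)) (2 * 2 ^ (k - i)),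
            ‖dyadicBlock (fun j => x j η) i l‖ ^ 2) :=
        mul_le_mul_of_nonneg_left (norm_sum_range_sq_le (fun j => x j η) hkn hnk) (by positivity)
    _ = _ := by ring

lemma tendsto_norm_conj_cesaro_sq (hx : ∀ j, IsSelfAdjoint (x j)) {p : H →L[ℂ] H}
    (hp : IsSelfAdjoint p) (hD : Tendsto (fun m => ‖p * dyadicMajorant x m * p‖) atTop (𝓝 0)) :
    Tendsto (fun n : ℕ => ‖p * ((n : ℝ)⁻¹ • ∑ j ∈ range n, x j) ^ 2 * p‖) atTop (𝓝 0) := by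
  have hlog : Tendsto (Nat.log 2) atTop atTop :=
    tendsto_atTop_atTop_of_monotone (fun _ _ => Nat.log_mono_right)
      fun k => ⟨2 ^ k, (Nat.log_pow one_lt_two k).ge⟩
  refine squeeze_zero' (Eventually.of_forall fun n => norm_nonneg _) ?_
    (by simpa using (hD.comp hlog).const_mul 2)
  filter_upwards [eventually_ne_atTop 0] with n hn
  have hsq : 0 ≤ ((n : ℝ)⁻¹ • ∑ j ∈ range n, x j) ^ 2 := by
    rw [smul_pow]
    exact smul_nonneg (by positivity) (isSelfAdjoint_sum _ fun j _ => hx j).sq_nonneg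
  have hle := cesaro_sq_le_two_smul_dyadicMajorant hx (Nat.pow_log_le_self 2 hn)
    (Nat.lt_pow_succ_log_self one_lt_two n)
  calc ‖p * ((n : ℝ)⁻¹ • ∑ j ∈ range n, x j) ^ 2 * p‖
      ≤ ‖p * ((2 : ℝ) • dyadicMajorant x (Nat.log 2 n)) * p‖ :=
        CStarAlgebra.norm_le_norm_of_nonneg_of_le (hp.conjugate_nonneg hsq)
          (hp.conjugate_le_conjugate hle)
    _ = 2 * ‖p * dyadicMajorant x (Nat.log 2 n) * p‖ := by
        rw [mul_smul_comm, smul_mul_assoc, norm_smul, Real.norm_two]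

end Operators

variable {H : Type*} [NormedAddCommGroup H] [InnerProductSpace ℂ H] [CompleteSpace H]

-- `x k` is the paper's `x_{k+1}`, whence the weights `log₂ (n + 2) / (n + 1)`.
/-- Rademacher–Menshov-type theorem: if `{x_n} ⊂ A` are pairwise
orthogonal and `∑ (log₂(n+1)/n)² ρ(|x_n|²) < ∞`, then the Cesàro means
`(1/n) ∑_{j=1}^n x_j` converge to `0` in bundle convergence in `A`.
(Here the sequence is indexed from `0`, so `x k` plays the role of `x_{k+1}`.) -/
theorem statement12 (R : Set (H →L[ℂ] H)) (hR : IsRealVNA R)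
    (ρ : (H →L[ℂ] H) →ₗ[ℝ] ℝ) (hρ : IsFNState (saPart R) ρ)
    (x : ℕ → H →L[ℂ] H) (hx : ∀ n, x n ∈ saPart R)
    (horth : ∀ i j, i ≠ j → ρ (jord (x i) (x j)) = 0)
    (hsum : Summable fun n : ℕ =>
      (Real.logb 2 ((n : ℝ) + 2) / ((n : ℝ) + 1)) ^ 2 * ρ (x n ^ 2)) :
    BundleConv (saPart R) ρ
      (fun n => ((n : ℝ)⁻¹) • ∑ j ∈ Finset.range n, x j) 0 := by
  have hxsa : ∀ j, IsSelfAdjoint (x j) := fun j => (hx j).2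
  have hD := dyadicMajorant_nonneg hxsa
  have hb : ∀ j, 0 ≤ ρ (x j ^ 2) :=
    fun j => hρ.pos _ ((ContinuousLinearMap.nonneg_iff_isPositive _).1 (hxsa j).sq_nonneg)
  refine ⟨dyadicMajorant x, fun m => ⟨⟨dyadicMajorant_mem hR (fun j => (hx j).1) m,
      IsSelfAdjoint.of_nonneg (hD m)⟩, (ContinuousLinearMap.nonneg_iff_isPositive _).1 (hD m)⟩,
    summable_map_dyadicMajorant ρ hb horth hsum, fun p hp => ?_⟩
  simpa using tendsto_norm_conj_cesaro_sq hxsa hp.2.1.2 hp.2.2.2.2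

end JW
end

section
/- Let A be a reversible JW-algebra with faithful normal semifinite trace τ, and τ₁ its extension to the enveloping von Neumann algebra W(A). If z ∈ R(A) is τ₁-integrable (τ₁(|z|) < ∞) and skew-symmetric (z* = −z), then τ₁(z) = 0. -/
/-!
Since `z` is skew, `iz` is self-adjoint with `|iz| = |z|`, so `|z| + iz = 2 (iz)⁺ ≥ 0`. The
defining property of `τ₁` then gives `τ₁(|z|) = τ₁(|z| + iz) = τ₁(|z|) + i τ₁(z)`.
-/

open Filter Finset
open scoped ComplexOrder Topology

namespace JW

variable {H : Type*} [NormedAddCommGroup H] [InnerProductSpace ℂ H] [CompleteSpace H]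

theorem _root_.CFC.abs_add_I_smul_nonneg {A : Type*} [CStarAlgebra A] [PartialOrder A]
    [StarOrderedRing A] {z : A} (hz : z ∈ skewAdjoint A) :
    0 ≤ CFC.abs z + Complex.I • z := by
  have hIz : IsSelfAdjoint (Complex.I • z) := IsSelfAdjoint.I_smul_of_mem_skewAdjoint (K := ℂ) hz
  have habs : CFC.abs (Complex.I • z) = CFC.abs z := by
    rw [CFC.abs_smul, Complex.norm_I, one_smul]
  rw [← habs, CFC.abs_add_self _ hIz]
  exact smul_nonneg zero_le_two (CFC.posPart_nonneg _)

theorem statement15_general (R : Set (H →L[ℂ] H))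
    (N : Submodule ℂ (H →L[ℂ] H)) (τ₁ : (H →L[ℂ] H) → ℂ)
    (hadd : ∀ a ∈ N, ∀ b ∈ N, τ₁ (a + b) = τ₁ a + τ₁ b)
    (hsmul : ∀ (c : ℂ), ∀ a ∈ N, τ₁ (c • a) = c * τ₁ a)
    (hext : ∀ a b : H →L[ℂ] H, a ∈ R → b ∈ R → IsSelfAdjoint a → star b = -b →
      a + Complex.I • b ∈ N → (a + Complex.I • b).IsPositive →
      τ₁ (a + Complex.I • b) = τ₁ a ∧ (τ₁ a).im = 0)
    (z w : H →L[ℂ] H) (hz : z ∈ R) (hzN : z ∈ N) (hzskew : star z = -z)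
    -- `w = |z|`
    (hw : w ∈ R) (hwN : w ∈ N) (hwpos : w.IsPositive) (hww : w * w = star z * z) :
    τ₁ z = 0 := by
  have hw0 : 0 ≤ w := (ContinuousLinearMap.nonneg_iff_isPositive w).2 hwpos
  have habs : CFC.abs z = w := CFC.sqrt_unique hww hw0
  have hpos : (w + Complex.I • z).IsPositive := by
    rw [← ContinuousLinearMap.nonneg_iff_isPositive, ← habs]
    exact CFC.abs_add_I_smul_nonneg hzskew
  have hIzN : Complex.I • z ∈ N := N.smul_mem _ hzN
  have htrace := (hext w z hw hz hw0.isSelfAdjoint hzskew (N.add_mem hwN hIzN) hpos).1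
  rw [hadd w hwN _ hIzN, hsmul _ z hzN, add_eq_left] at htrace
  exact (mul_eq_zero.mp htrace).resolve_left Complex.I_ne_zero

/-- if `z ∈ R(A)` is `τ₁`-integrable and skew-symmetric (`z* = -z`),
then `τ₁(z) = 0`. Here integrable elements form a submodule `N` and the extended
trace `τ₁` is linear on `N` and satisfies `τ₁(a + ib) = τ₁(a)` for positive `a + ib`
with `a ∈ R` self-adjoint, `b ∈ R` skew; `w` plays the role of `|z|`. -/
theorem statement15 (R : Set (H →L[ℂ] H)) (hR : IsRealVNA R)
    (N : Submodule ℂ (H →L[ℂ] H)) (τ₁ : (H →L[ℂ] H) → ℂ)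
    (hadd : ∀ a ∈ N, ∀ b ∈ N, τ₁ (a + b) = τ₁ a + τ₁ b)
    (hsmul : ∀ (c : ℂ), ∀ a ∈ N, τ₁ (c • a) = c * τ₁ a)
    (hext : ∀ a b : H →L[ℂ] H, a ∈ R → b ∈ R → IsSelfAdjoint a → star b = -b →
      a + Complex.I • b ∈ N → (a + Complex.I • b).IsPositive →
      τ₁ (a + Complex.I • b) = τ₁ a ∧ (τ₁ a).im = 0)
    (z w : H →L[ℂ] H) (hz : z ∈ R) (hzN : z ∈ N) (hzskew : star z = -z)
    -- `w = |z|`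
    (hw : w ∈ R) (hwN : w ∈ N) (hwpos : w.IsPositive) (hww : w * w = star z * z) :
    τ₁ z = 0 :=
  statement15_general R N τ₁ hadd hsmul hext z w hz hzN hzskew hw hwN hwpos hww

end JW
end

section
/- Let A be a reversible JW-algebra with faithful normal state ρ. If {x_n} ⊂ A is uniformly bounded and converges almost uniformly to x ∈ A (for each ε > 0 there is a projection p ∈ A with ρ(p^⊥) < ε and ‖p(x_n − x)²p‖ → 0), then x_n → x in the strong operator topology on H. -/
open Filter Finset
open scoped ComplexOrder Topology

namespace JW

variable {H : Type*} [NormedAddCommGroup H] [InnerProductSpace ℂ H] [CompleteSpace H]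

/-! Strong convergence at `ξ` is tested along every ultrafilter `𝒰 ≤ atTop`. The bounded positive
operators `(x n - l) ^ 2` have a weak-operator limit `G` along `𝒰`; it lies in `R` because `R` is
weakly closed, and it is positive. For each projection `p` given by almost uniform convergence,
`‖p (x n - l) ^ 2 p‖ → 0` forces `p G p = 0`; as `G ≥ 0` this gives `G p = 0`, so
`G = (1 - p) G (1 - p) ≤ ‖G‖ (1 - p)` and `ρ G ≤ ‖G‖ ρ (1 - p)`.
So `ρ G = 0`, and `G = 0` by faithfulness. Finally `⟪ξ, (x n - l) ^ 2 ξ⟫ = ‖(x n - l) ξ‖ ^ 2`,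
so the weak convergence of the squares to `0` is the strong convergence of `x n - l` to `0`. -/

open scoped InnerProductSpace
open ContinuousLinearMapWOT

section CStar

variable {A : Type*} [CStarAlgebra A] [PartialOrder A] [StarOrderedRing A]

theorem mul_eq_zero_of_mul_mul_eq_zero {a p : A} (ha : 0 ≤ a) (hp : IsSelfAdjoint p)
    (hpap : p * a * p = 0) : a * p = 0 := by
  obtain ⟨s, rfl⟩ := CStarAlgebra.nonneg_iff_eq_star_mul_self.mp ha
  have hsp : s * p = 0 := by
    rw [← CStarRing.star_mul_self_eq_zero_iff, star_mul, hp.star_eq, ← hpap]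
    noncomm_ring
  rw [mul_assoc, hsp, mul_zero]

theorem le_norm_smul_one_sub_of_mul_mul_eq_zero {a p : A} (ha : 0 ≤ a)
    (hp : IsStarProjection p) (hpap : p * a * p = 0) : a ≤ ‖a‖ • (1 - p) := by
  have hap : a * p = 0 := mul_eq_zero_of_mul_mul_eq_zero ha hp.isSelfAdjoint hpap
  have hpa : p * a = 0 := by
    simpa [(IsSelfAdjoint.of_nonneg ha).star_eq, hp.isSelfAdjoint.star_eq] using congr(star $hap)
  have hq : star (1 - p) * a * (1 - p) = a := by
    rw [hp.one_sub.isSelfAdjoint.star_eq]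
    simp [sub_mul, mul_sub, hap, hpa]
  calc a = star (1 - p) * a * (1 - p) := hq.symm
    _ ≤ ‖a‖ • (star (1 - p) * (1 - p)) :=
      CStarAlgebra.star_left_conjugate_le_norm_smul (IsSelfAdjoint.of_nonneg ha)
    _ = ‖a‖ • (1 - p) := by
      rw [hp.one_sub.isSelfAdjoint.star_eq, hp.one_sub.isIdempotentElem.eq]

end CStar

theorem exists_tendsto_wot_of_norm_le {ι : Type*} (𝒰 : Ultrafilter ι) {g : ι → H →L[ℂ] H}
    {c : ℝ} (hg : ∀ i, ‖g i‖ ≤ c) :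
    ∃ G : H →L[ℂ] H, Tendsto (fun i => ofCLM (g i)) 𝒰 (𝓝 (ofCLM G)) := by
  have hbound : ∀ i (y x : H), ‖⟪y, g i x⟫_ℂ‖ ≤ c * ‖y‖ * ‖x‖ := fun i y x =>
    calc ‖⟪y, g i x⟫_ℂ‖ ≤ ‖y‖ * ‖g i x‖ := norm_inner_le_norm _ _
      _ ≤ ‖y‖ * (c * ‖x‖) := by gcongr; exact (g i).le_of_opNorm_le (hg i) x
      _ = c * ‖y‖ * ‖x‖ := by ring
  have hlim : ∀ y x : H, ∃ z, Tendsto (fun i => ⟪y, g i x⟫_ℂ) 𝒰 (𝓝 z) := fun y x => by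
    obtain ⟨z, -, hz⟩ := (isCompact_closedBall (0 : ℂ) (c * ‖y‖ * ‖x‖)).ultrafilter_le_nhds
      (𝒰.map fun i => ⟪y, g i x⟫_ℂ)
      (le_principal_iff.mpr <| mem_map.mpr <| univ_mem' fun i => by simpa using hbound i y x)
    exact ⟨z, hz⟩
  choose B hB using hlim
  let Bₗ : H →ₗ⋆[ℂ] H →ₗ[ℂ] ℂ := LinearMap.mk₂'ₛₗ (starRingEnd ℂ) (RingHom.id ℂ) B
    (fun y y' x => tendsto_nhds_unique (hB (y + y') x) <| by
      simpa only [inner_add_left] using (hB y x).add (hB y' x))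
    (fun a y x => tendsto_nhds_unique (hB (a • y) x) <| by
      simpa only [inner_smul_left, smul_eq_mul] using (hB y x).const_mul (starRingEnd ℂ a))
    (fun y x x' => tendsto_nhds_unique (hB y (x + x')) <| by
      simpa only [map_add, inner_add_right] using (hB y x).add (hB y x'))
    (fun a y x => tendsto_nhds_unique (hB y (a • x)) <| by
      simpa only [map_smul, inner_smul_right, smul_eq_mul, RingHom.id_apply] using
        (hB y x).const_mul a)
  let B' := Bₗ.mkContinuous₂ c fun y x =>
    le_of_tendsto (hB y x).norm (.of_forall fun i => hbound i y x)
  -- `B'` is conjugate-linear in `y`, so it is represented as `⟪G' y, x⟫`; the limit is `G'†`.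
  refine ⟨ContinuousLinearMap.adjoint (InnerProductSpace.continuousLinearMapOfBilin B'), ?_⟩
  rw [tendsto_iff_forall_inner_apply_tendsto]
  intro x y
  simp only [ofCLM_apply, ContinuousLinearMap.adjoint_inner_right,
    InnerProductSpace.continuousLinearMapOfBilin_apply]
  exact hB y x

section WOTLimits

variable {ι : Type*} {l : Filter ι} [l.NeBot] {g : ι → H →L[ℂ] H} {G : H →L[ℂ] H}

omit [CompleteSpace H] in
theorem mem_of_tendsto_wot {R : Set (H →L[ℂ] H)} (hR : IsClosed (ofCLM '' R))
    (hG : Tendsto (fun i => ofCLM (g i)) l (𝓝 (ofCLM G))) (hg : ∀ᶠ i in l, g i ∈ R) : G ∈ R := by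
  obtain ⟨G', hG'R, hG'⟩ := hR.mem_of_tendsto hG (hg.mono fun i hi => Set.mem_image_of_mem _ hi)
  rwa [← ofCLM_injective hG']

theorem isPositive_of_tendsto_wot (hG : Tendsto (fun i => ofCLM (g i)) l (𝓝 (ofCLM G)))
    (hg : ∀ᶠ i in l, (g i).IsPositive) : G.IsPositive := by
  have hsa : IsSelfAdjoint G := ofCLM_injective <| tendsto_nhds_unique hG.star <|
    hG.congr' <| hg.mono fun i hi => congrArg ofCLM hi.isSelfAdjoint.star_eq.symm
  refine (G.isPositive_iff').mpr ⟨hsa, fun x => ?_⟩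
  calc 0 ≤ ⟪x, G x⟫_ℂ := ge_of_tendsto (tendsto_iff_forall_inner_apply_tendsto.mp hG x x)
        (hg.mono fun i hi => hi.inner_nonneg_right x)
    _ = ⟪G x, x⟫_ℂ := (hsa.isSymmetric x x).symm

omit [CompleteSpace H] in
theorem mul_mul_eq_zero_of_tendsto_wot (hG : Tendsto (fun i => ofCLM (g i)) l (𝓝 (ofCLM G)))
    {a b : H →L[ℂ] H} (hab : Tendsto (fun i => ‖a * g i * b‖) l (𝓝 0)) : a * G * b = 0 := by
  have hlim : Tendsto (fun i => ofCLM (a * g i * b)) l (𝓝 (ofCLM (a * G * b))) := by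
    simpa only [ofCLM_mul] using (hG.const_mul (ofCLM a)).mul_const (ofCLM b)
  have hzero : Tendsto (fun i => ofCLM (a * g i * b)) l (𝓝 (ofCLM 0)) :=
    (continuous_ofCLM.tendsto 0).comp (tendsto_zero_iff_norm_tendsto_zero.mpr hab)
  exact ofCLM_injective (tendsto_nhds_unique hlim hzero)

end WOTLimits

theorem inner_sq_apply_self {a : H →L[ℂ] H} (ha : IsSelfAdjoint a) (ξ : H) :
    ⟪ξ, (a ^ 2) ξ⟫_ℂ = (‖a ξ‖ ^ 2 : ℝ) :=
  calc ⟪ξ, (a ^ 2) ξ⟫_ℂ = ⟪a ξ, a ξ⟫_ℂ := (ha.isSymmetric ξ (a ξ)).symm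
    _ = (‖a ξ‖ ^ 2 : ℝ) := by rw [inner_self_eq_norm_sq_to_K]; norm_cast

theorem tendsto_apply_zero_of_tendsto_wot_sq {ι : Type*} {l : Filter ι} {y : ι → H →L[ℂ] H}
    (hy : ∀ i, IsSelfAdjoint (y i)) (h : Tendsto (fun i => ofCLM (y i ^ 2)) l (𝓝 0)) (ξ : H) :
    Tendsto (fun i => y i ξ) l (𝓝 0) := by
  have hinner := tendsto_iff_forall_inner_apply_tendsto.mp h ξ ξ
  simp only [ofCLM_apply, fun i => inner_sq_apply_self (hy i) ξ] at hinner
  have hsq : Tendsto (fun i => ‖y i ξ‖ ^ 2) l (𝓝 0) := tendsto_ofReal_iff.mp (by simpa using hinner)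
  exact tendsto_zero_iff_norm_tendsto_zero.mpr (by simpa using hsq.sqrt)

theorem IsRealVNA.sub_mem {R : Set (H →L[ℂ] H)} (hR : IsRealVNA R) {a b : H →L[ℂ] H}
    (ha : a ∈ R) (hb : b ∈ R) : a - b ∈ R := by
  simpa [sub_eq_add_neg] using hR.add_mem ha (hR.smul_mem (-1) hb)

namespace IsFNState

variable {A : Set (H →L[ℂ] H)} {ρ : (H →L[ℂ] H) →ₗ[ℝ] ℝ}

omit [CompleteSpace H] in
theorem mono (hρ : IsFNState A ρ) {a b : H →L[ℂ] H} (hab : a ≤ b) : ρ a ≤ ρ b := by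
  simpa using hρ.pos (b - a) hab

omit [CompleteSpace H] in
theorem eq_zero_of_forall_le_mul (hρ : IsFNState A ρ) {a : H →L[ℂ] H} (haA : a ∈ A)
    (ha : a.IsPositive) (C : ℝ) (h : ∀ ε > 0, ρ a ≤ C * ε) : a = 0 := by
  have hlim : Tendsto (fun ε : ℝ => C * ε) (𝓝[>] (0 : ℝ)) (𝓝 0) := by
    simpa using ((continuous_const_mul C).tendsto 0).mono_left nhdsWithin_le_nhds
  have hle : ρ a ≤ 0 := ge_of_tendsto hlim (eventually_nhdsWithin_of_forall fun ε hε => h ε hε)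
  exact hρ.faithful a haA ha (le_antisymm hle (hρ.pos a ha))

end IsFNState

theorem eq_zero_of_tendsto_wot_of_forall_projection {R : Set (H →L[ℂ] H)}
    (hR : IsClosed (ofCLM '' R)) {ρ : (H →L[ℂ] H) →ₗ[ℝ] ℝ} (hρ : IsFNState (saPart R) ρ)
    {g : ℕ → H →L[ℂ] H} (hgR : ∀ n, g n ∈ R) (hg : ∀ n, 0 ≤ g n)
    (hproj : ∀ ε > 0, ∃ p, IsProjection p ∧ ρ (1 - p) < ε ∧
      Tendsto (fun n => ‖p * g n * p‖) atTop (𝓝 0))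
    {l : Filter ℕ} [l.NeBot] (hl : l ≤ atTop) {G : H →L[ℂ] H}
    (hG : Tendsto (fun n => ofCLM (g n)) l (𝓝 (ofCLM G))) : G = 0 := by
  have hGpos : G.IsPositive :=
    isPositive_of_tendsto_wot hG <| .of_forall fun n => (g n).nonneg_iff_isPositive.mp (hg n)
  have hGA : G ∈ saPart R := ⟨mem_of_tendsto_wot hR hG (.of_forall hgR), hGpos.isSelfAdjoint⟩
  refine hρ.eq_zero_of_forall_le_mul hGA hGpos ‖G‖ fun ε hε => ?_
  obtain ⟨p, hp, hpε, hpg⟩ := hproj ε hε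
  have hpGp : p * G * p = 0 := mul_mul_eq_zero_of_tendsto_wot hG (hpg.mono_left hl)
  calc ρ G ≤ ρ (‖G‖ • (1 - p)) := hρ.mono <| le_norm_smul_one_sub_of_mul_mul_eq_zero
        (G.nonneg_iff_isPositive.mpr hGpos) ⟨hp.1, hp.2⟩ hpGp
    _ = ‖G‖ * ρ (1 - p) := by rw [map_smul, smul_eq_mul]
    _ ≤ ‖G‖ * ε := by gcongr

/-- a uniformly bounded sequence in a reversible JW-algebra which
converges almost uniformly converges in the strong operator topology. -/
theorem statement19 (R : Set (H →L[ℂ] H)) (hR : IsRealVNA R)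
    (ρ : (H →L[ℂ] H) →ₗ[ℝ] ℝ) (hρ : IsFNState (saPart R) ρ)
    (x : ℕ → H →L[ℂ] H) (hx : ∀ n, x n ∈ saPart R)
    (l : H →L[ℂ] H) (hl : l ∈ saPart R)
    (hbdd : ∃ C : ℝ, ∀ n, ‖x n‖ ≤ C)
    (hau : AUConv (saPart R) ρ x l) :
    ∀ ξ : H, Tendsto (fun n => x n ξ) atTop (𝓝 (l ξ)) := by
  obtain ⟨C, hC⟩ := hbdd
  intro ξ
  rw [tendsto_iff_ultrafilter]
  intro 𝒰 h𝒰
  have hsa : ∀ n, IsSelfAdjoint (x n - l) := fun n => (hx n).2.sub hl.2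
  have hmem : ∀ n, x n - l ∈ R := fun n => hR.sub_mem (hx n).1 hl.1
  have hbound : ∀ n, ‖(x n - l) ^ 2‖ ≤ (C + ‖l‖) ^ 2 := fun n =>
    (norm_pow_le' _ two_pos).trans <| pow_le_pow_left₀ (norm_nonneg _)
      ((norm_sub_le _ _).trans (by gcongr; exact hC n)) 2
  obtain ⟨G, hG⟩ := exists_tendsto_wot_of_norm_le 𝒰 hbound
  have hG0 : G = 0 := eq_zero_of_tendsto_wot_of_forall_projection hR.wclosed hρ
    (fun n => by rw [pow_two]; exact hR.mul_mem (hmem n) (hmem n)) (fun n => (hsa n).sq_nonneg)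
    (fun ε hε => let ⟨p, _, hp, hpε, hpg⟩ := hau ε hε; ⟨p, hp, hpε, hpg⟩) h𝒰 hG
  rw [hG0, ofCLM_zero] at hG
  simpa [tendsto_sub_nhds_zero_iff] using tendsto_apply_zero_of_tendsto_wot_sq hsa hG ξ

end JW
end
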